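/- Let a, d, K > 0 be real constants, let f : ℝ → ℝ be differentiable and nonnegative on [0, ∞), and let g : ℝ → ℝ be continuous and nonnegative on [0, ∞). Assume f′(t) + 2d·g(t) ≤ K for all t ≥ 0 and f(t) ≤ e^{−at}·f(0) + K/a for all t ≥ 0. Then for every t ≥ 0, d·∫₀ᵗ e^{s}·g(s) ds ≤ (1 + 1/a)·K·e^{t} + (1 + e^{t}·∫₀ᵗ e^{(1−a)s} ds)·f(0). -/

import Mathlib

/-!
Multiplying `f' + 2d·g ≤ K` by `eˢ` gives `(eˢ f)' + 2d·eˢ g ≤ eˢ (f + K)`; integrating over `[0, t]`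
bounds `2d ∫₀ᵗ eˢ g` by `f(0) + ∫₀ᵗ eˢ (f + K)`, and the decay estimate for `f` bounds the last
integral by `f(0) ∫₀ᵗ e^{(1-a)s} ds + (1 + 1/a) K (eᵗ - 1)`. The resulting bound is nonnegative,
so it also bounds `d ∫₀ᵗ eˢ g`.
-/

open Real Set intervalIntegral

theorem exp_mul_sub_add_integral_le_of_deriv_add_le {f f' g : ℝ → ℝ} {a b c K : ℝ} (hab : a ≤ b)
    (hf : ∀ x ∈ Icc a b, HasDerivAt f (f' x) x) (hg : ContinuousOn g (Icc a b))
    (hle : ∀ x ∈ Ioo a b, f' x + c * g x ≤ K) :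
    exp b * f b - exp a * f a + c * ∫ x in a..b, exp x * g x
      ≤ ∫ x in a..b, exp x * (f x + K) := by
  have hfc : ContinuousOn f (Icc a b) := fun x hx => (hf x hx).continuousAt.continuousWithinAt
  have hfK : ContinuousOn (fun x => exp x * (f x + K)) (Icc a b) :=
    continuous_exp.continuousOn.mul (hfc.add continuousOn_const)
  have hcg : ContinuousOn (fun x => c * (exp x * g x)) (Icc a b) :=
    continuousOn_const.mul (continuous_exp.continuousOn.mul hg)
  have hmain := sub_le_integral_of_hasDeriv_right_of_le (g := fun x => exp x * f x)
    (φ := fun x => exp x * (f x + K) - c * (exp x * g x)) hab (continuous_exp.continuousOn.mul hfc)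
    (fun x hx => ((hasDerivAt_exp x).mul (hf x (Ioo_subset_Icc_self hx))).hasDerivWithinAt)
    (hfK.sub hcg).integrableOn_Icc
    (fun x hx => by linarith [mul_nonneg (exp_pos x).le (sub_nonneg.2 (hle x hx))])
  rw [integral_sub (hfK.intervalIntegrable_of_Icc hab) (hcg.intervalIntegrable_of_Icc hab),
    integral_const_mul] at hmain
  linarith

theorem integral_exp_mul_le_of_le_exp_decay {f : ℝ → ℝ} {a A C t : ℝ} (ht : 0 ≤ t)
    (hf : ContinuousOn f (Icc 0 t)) (hdecay : ∀ s ∈ Icc 0 t, f s ≤ exp (-a * s) * A + C) :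
    ∫ s in 0..t, exp s * f s ≤ A * (∫ s in 0..t, exp ((1 - a) * s)) + C * (exp t - 1) := by
  have hA : Continuous fun s => A * exp ((1 - a) * s) := by fun_prop
  have hC : Continuous fun s => C * exp s := by fun_prop
  calc ∫ s in 0..t, exp s * f s
      ≤ ∫ s in 0..t, A * exp ((1 - a) * s) + C * exp s := by
        refine integral_mono_on ht
          ((continuous_exp.continuousOn.mul hf).intervalIntegrable_of_Icc ht)
          ((hA.add hC).intervalIntegrable 0 t) fun s hs => ?_
        have hexp : exp ((1 - a) * s) = exp s * exp (-a * s) := by rw [← exp_add]; ring_nf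
        rw [hexp]
        linarith [mul_nonneg (exp_pos s).le (sub_nonneg.2 (hdecay s hs))]
    _ = A * (∫ s in 0..t, exp ((1 - a) * s)) + C * (exp t - 1) := by
        rw [integral_add (hA.intervalIntegrable 0 t) (hC.intervalIntegrable 0 t),
          integral_const_mul, integral_const_mul, integral_exp, exp_zero]

theorem weighted_integral_estimate_general
    (a d K : ℝ) (ha : 0 < a) (hK : 0 < K)
    (f f' g : ℝ → ℝ)
    (hf : ∀ t ≥ 0, HasDerivAt f (f' t) t)
    (hfpos : ∀ t ≥ 0, 0 ≤ f t)
    (hg : ContinuousOn g (Set.Ici 0))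
    (hineq : ∀ t ≥ 0, f' t + 2 * d * g t ≤ K)
    (hdecay : ∀ t ≥ 0, f t ≤ Real.exp (-a * t) * f 0 + K / a) :
    ∀ t ≥ 0,
      d * ∫ s in (0:ℝ)..t, Real.exp s * g s
        ≤ (1 + 1/a) * K * Real.exp t
          + (1 + Real.exp t * ∫ s in (0:ℝ)..t, Real.exp ((1 - a) * s)) * f 0 := by
  intro t ht
  have hfc : ContinuousOn f (Icc 0 t) := fun s hs => (hf s hs.1).continuousAt.continuousWithinAt
  have henergy := exp_mul_sub_add_integral_le_of_deriv_add_le ht (fun s hs => hf s hs.1)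
    (hg.mono Icc_subset_Ici_self) (fun s hs => hineq s hs.1.le)
  have hforcing := integral_exp_mul_le_of_le_exp_decay (f := fun s => f s + K) (a := a)
    (A := f 0) (C := (1 + 1 / a) * K) ht (hfc.add continuousOn_const) fun s hs => by
      linarith [hdecay s hs.1, show (1 + 1 / a) * K = K / a + K by ring]
  have hJ : 0 ≤ ∫ s in (0:ℝ)..t, exp ((1 - a) * s) :=
    integral_nonneg ht fun s _ => (exp_pos _).le
  have hf0 := hfpos 0 le_rfl
  have het := one_le_exp ht
  have hKa : 0 ≤ (1 + 1 / a) * K := by positivity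
  rw [exp_zero, one_mul] at henergy
  linarith [mul_nonneg hJ hf0, mul_nonneg (sub_nonneg.2 het) (mul_nonneg hJ hf0),
    mul_nonneg (exp_pos t).le (hfpos t ht), mul_nonneg hKa (exp_pos t).le]

/-- Abstract exponentially weighted integral estimate (inequality (2.28)):
if f ≥ 0, g ≥ 0, f′ + 2d·g ≤ K and f(t) ≤ e^{−at}f(0) + K/a on [0, ∞), then
d·∫₀ᵗ eˢ·g(s) ds ≤ (1 + 1/a)·K·eᵗ + (1 + eᵗ·∫₀ᵗ e^{(1−a)s} ds)·f(0). -/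
theorem weighted_integral_estimate
    (a d K : ℝ) (ha : 0 < a) (hd : 0 < d) (hK : 0 < K)
    (f f' g : ℝ → ℝ)
    (hf : ∀ t ≥ 0, HasDerivAt f (f' t) t)
    (hfpos : ∀ t ≥ 0, 0 ≤ f t)
    (hg : ContinuousOn g (Set.Ici 0))
    (hgpos : ∀ t ≥ 0, 0 ≤ g t)
    (hineq : ∀ t ≥ 0, f' t + 2 * d * g t ≤ K)
    (hdecay : ∀ t ≥ 0, f t ≤ Real.exp (-a * t) * f 0 + K / a) :
    ∀ t ≥ 0,
      d * ∫ s in (0:ℝ)..t, Real.exp s * g s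
        ≤ (1 + 1/a) * K * Real.exp t
          + (1 + Real.exp t * ∫ s in (0:ℝ)..t, Real.exp ((1 - a) * s)) * f 0 :=
  weighted_integral_estimate_general a d K ha hK f f' g hf hfpos hg hineq hdecay
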